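/- Let i,j,k be nonnegative integers with i ≥ j and i ≥ k. The number of shortest 26-neighbor paths in Z^3 from (0,0,0) to (i,j,k) equals (Σ_{b≥0, 2b≤i−j} i!/(b!·(j+b)!·(i−j−2b)!)) × (Σ_{a≥0, 2a≤i−k} i!/(a!·(k+a)!·(i−k−2a)!)). -/

import Mathlib

/-- Two points of `ℤ³` are 26-neighbors: distinct and each coordinate differs by at most 1. -/
def Adj26 (p q : ℤ × ℤ × ℤ) : Prop :=
  p ≠ q ∧ (p.1 - q.1).natAbs ≤ 1 ∧ (p.2.1 - q.2.1).natAbs ≤ 1 ∧ (p.2.2 - q.2.2).natAbs ≤ 1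

/-- `f` is a 26-neighbor path of length `n` from `p` to `q`. -/
def IsPath26 (n : ℕ) (f : Fin (n + 1) → ℤ × ℤ × ℤ) (p q : ℤ × ℤ × ℤ) : Prop :=
  f 0 = p ∧ f (Fin.last n) = q ∧ ∀ t : Fin n, Adj26 (f t.castSucc) (f t.succ)

/-!
In a shortest path to `(i, j, k)` every step raises `x` by exactly `1`: the `i` increments of `x`
are at most `1` and add up to `i`. So such a path amounts to two independent sequences in
`{-1, 0, 1}ⁱ`, the increments of `y` and of `z`, with sums `j` and `k`. A sequence with sum `j`
and `b` entries `-1` has `j + b` entries `1`; choosing their positions gives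
`C(i, b) * C(i - b, j + b) = i! / (b! (j + b)! (i - j - 2b)!)` sequences.
-/

open Finset Nat

lemma Nat.choose_mul_choose_sub_eq_ite {n j : ℕ} (hj : j ≤ n) (b : ℕ) :
    n.choose b * (n - b).choose (j + b) =
      if 2 * b ≤ n - j then n ! / (b ! * (j + b)! * (n - j - 2 * b)!) else 0 := by
  split_ifs with h
  · have hrest : n - b - (j + b) = n - j - 2 * b := by omega
    symm
    refine Nat.div_eq_of_eq_mul_left (by positivity) ?_
    calc n ! = n.choose b * b ! * (n - b)! :=
          (Nat.choose_mul_factorial_mul_factorial (by omega)).symm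
      _ = n.choose b * b ! * ((n - b).choose (j + b) * (j + b)! * (n - j - 2 * b)!) := by
          rw [← hrest, Nat.choose_mul_factorial_mul_factorial (n := n - b) (by omega)]
      _ = _ := by ring
  · rw [Nat.choose_eq_zero_of_lt (n := n - b) (by omega), mul_zero]

section StepSeqs

variable {ι : Type*} [DecidableEq ι]

def signSeq (S T : Finset ι) (i : ι) : ℤ :=
  if i ∈ T then 1 else if i ∈ S then -1 else 0

lemma signSeq_mem (S T : Finset ι) (i : ι) :
    signSeq S T i = -1 ∨ signSeq S T i = 0 ∨ signSeq S T i = 1 := by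
  unfold signSeq
  split_ifs <;> simp

variable [Fintype ι]

lemma filter_signSeq_eq_one (S T : Finset ι) : ({i | signSeq S T i = 1} : Finset ι) = T := by
  ext i
  rw [mem_filter, signSeq]
  split_ifs <;> simp_all

lemma filter_signSeq_eq_neg_one {S T : Finset ι} (h : Disjoint S T) :
    ({i | signSeq S T i = -1} : Finset ι) = S := by
  ext i
  rw [mem_filter, signSeq]
  split_ifs with hT hS
  · simp [disjoint_right.1 h hT]
  all_goals simp [hS]

omit [DecidableEq ι] in
lemma sum_eq_card_filter_eq_one_sub {s : ι → ℤ} (hs : ∀ i, s i = -1 ∨ s i = 0 ∨ s i = 1) :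
    ∑ i, s i = #{i | s i = 1} - #{i | s i = -1} := by
  have hsplit : ∀ i, s i = (if s i = 1 then 1 else 0) - (if s i = -1 then 1 else 0) := by
    intro i
    rcases hs i with h | h | h <;> simp [h]
  rw [sum_congr rfl fun i _ => hsplit i, sum_sub_distrib, sum_boole, sum_boole]

variable (ι) in
def stepSeqs (j : ℤ) : Finset (ι → ℤ) :=
  {s ∈ Fintype.piFinset fun _ => {-1, 0, 1} | ∑ i, s i = j}

lemma mem_stepSeqs {s : ι → ℤ} {j : ℤ} :
    s ∈ stepSeqs ι j ↔ (∀ i, s i = -1 ∨ s i = 0 ∨ s i = 1) ∧ ∑ i, s i = j := by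
  simp [stepSeqs]

lemma mem_sigma_powersetCard_compl {j : ℕ} {p : Σ _ : Finset ι, Finset ι} :
    p ∈ univ.sigma (fun S => powersetCard (#S + j) Sᶜ) ↔ Disjoint p.1 p.2 ∧ #p.2 = #p.1 + j := by
  simp [subset_compl_iff_disjoint_left]

/-- A sequence in `stepSeqs` is encoded by the positions `S` of its entries `-1` and `T` of its
entries `1`. -/
lemma card_stepSeqs_eq_card_sigma (j : ℕ) :
    #(stepSeqs ι j) = #(univ.sigma fun S : Finset ι => powersetCard (#S + j) Sᶜ) := by
  refine card_nbij' (fun s => ⟨({i | s i = -1} : Finset ι), ({i | s i = 1} : Finset ι)⟩)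
    (fun p => signSeq p.1 p.2) (fun s hs => ?_) (fun p hp => ?_) (fun s hs => ?_) (fun p hp => ?_)
  all_goals rw [mem_coe] at *
  · rw [mem_stepSeqs] at hs
    have hsum := sum_eq_card_filter_eq_one_sub hs.1
    refine mem_sigma_powersetCard_compl.2 ⟨disjoint_filter.2 fun i _ h => by simp [h], ?_⟩
    dsimp only
    omega
  · obtain ⟨hdisj, hcard⟩ := mem_sigma_powersetCard_compl.1 hp
    refine mem_stepSeqs.2 ⟨signSeq_mem _ _, ?_⟩
    rw [sum_eq_card_filter_eq_one_sub (signSeq_mem _ _), filter_signSeq_eq_one,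
      filter_signSeq_eq_neg_one hdisj, hcard]
    push_cast
    ring
  · funext i
    rcases (mem_stepSeqs.1 hs).1 i with h | h | h <;> simp [signSeq, h]
  · obtain ⟨S, T⟩ := p
    simp only [filter_signSeq_eq_one, filter_signSeq_eq_neg_one (mem_sigma_powersetCard_compl.1 hp).1]

lemma card_stepSeqs (j : ℕ) :
    #(stepSeqs ι j) = ∑ b ∈ range (Fintype.card ι + 1),
      (Fintype.card ι).choose b * (Fintype.card ι - b).choose (j + b) := by
  calc #(stepSeqs ι j)
      = ∑ S : Finset ι, (Fintype.card ι - #S).choose (#S + j) := by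
        simp [card_stepSeqs_eq_card_sigma, card_sigma, card_compl]
    _ = _ := by
        rw [← powerset_univ, sum_powerset_apply_card (fun b => (Fintype.card ι - b).choose (b + j)),
          Finset.card_univ]
        simp [add_comm]

end StepSeqs

section Increments

variable {G : Type*} [AddCommGroup G] {n : ℕ}

lemma Fin.partialSum_last (d : Fin n → G) : Fin.partialSum d (Fin.last n) = ∑ t, d t := by
  rw [Fin.partialSum, Fin.val_last, List.take_of_length_le (by simp), List.sum_ofFn]

lemma Fin.add_partialSum_sub (f : Fin (n + 1) → G) (t : Fin (n + 1)) :
    f 0 + Fin.partialSum (fun s : Fin n => f s.succ - f s.castSucc) t = f t := by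
  simpa [sub_eq_neg_add] using congrFun (Fin.partialSum_left_neg f) t

def pathIncrementsEquiv (P : G → Prop) (p q : G) :
    {f : Fin (n + 1) → G //
        f 0 = p ∧ f (Fin.last n) = q ∧ ∀ t : Fin n, P (f t.succ - f t.castSucc)} ≃
      {d : Fin n → G // ∑ t, d t = q - p ∧ ∀ t, P (d t)} where
  toFun f := ⟨fun t => f.1 t.succ - f.1 t.castSucc, by
    obtain ⟨f, hp, hq, hP⟩ := f
    refine ⟨?_, hP⟩
    dsimp only
    rw [← Fin.partialSum_last, ← hp, ← hq]
    exact eq_sub_of_add_eq' (Fin.add_partialSum_sub f _)⟩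
  invFun d := ⟨fun t => p + Fin.partialSum d.1 t, by
    obtain ⟨d, hsum, hP⟩ := d
    refine ⟨by simp, by simp [Fin.partialSum_last, hsum], fun t => ?_⟩
    simpa [Fin.partialSum_succ] using hP t⟩
  left_inv f := by
    obtain ⟨f, rfl, -⟩ := f
    ext1
    exact funext (Fin.add_partialSum_sub f)
  right_inv d := by
    ext1
    funext t
    simp [Fin.partialSum_succ]

end Increments

lemma adj26_iff_adj26_zero_sub {p q : ℤ × ℤ × ℤ} : Adj26 p q ↔ Adj26 0 (q - p) := by
  simp only [Adj26, Prod.fst_sub, Prod.snd_sub, Prod.fst_zero, Prod.snd_zero, zero_sub,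
    Int.natAbs_neg]
  rw [ne_comm (a := 0), sub_ne_zero, ne_comm (a := q)]
  exact and_congr_right' (by omega)

lemma isPath26_iff {n : ℕ} {f : Fin (n + 1) → ℤ × ℤ × ℤ} {p q : ℤ × ℤ × ℤ} :
    IsPath26 n f p q ↔
      f 0 = p ∧ f (Fin.last n) = q ∧ ∀ t : Fin n, Adj26 0 (f t.succ - f t.castSucc) :=
  and_congr_right' (and_congr_right' (forall_congr' fun _ => adj26_iff_adj26_zero_sub))

lemma adj26_zero_iff {d : ℤ × ℤ × ℤ} :
    Adj26 0 d ↔ d ≠ 0 ∧ d.1.natAbs ≤ 1 ∧ d.2.1.natAbs ≤ 1 ∧ d.2.2.natAbs ≤ 1 := by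
  simp only [Adj26, ne_comm (a := (0 : ℤ × ℤ × ℤ)), Prod.fst_zero, Prod.snd_zero, zero_sub,
    Int.natAbs_neg]

lemma fst_eq_one_of_adj26_of_sum {n : ℕ} {d : Fin n → ℤ × ℤ × ℤ} (hd : ∀ t, Adj26 0 (d t))
    (hsum : (∑ t, d t).1 = n) (t : Fin n) : (d t).1 = 1 := by
  have hle : ∀ t ∈ univ, (d t).1 ≤ 1 := fun t _ => by
    have := (adj26_zero_iff.1 (hd t)).2.1
    omega
  refine (sum_eq_sum_iff_of_le hle).1 ?_ t (mem_univ t)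
  simpa [Prod.fst_sum] using hsum

def shortestStepsEquiv (n : ℕ) (j k : ℤ) :
    {d : Fin n → ℤ × ℤ × ℤ // ∑ t, d t = ((n : ℤ), j, k) ∧ ∀ t, Adj26 0 (d t)} ≃
      stepSeqs (Fin n) j × stepSeqs (Fin n) k where
  toFun d :=
    (⟨fun t => (d.1 t).2.1, mem_stepSeqs.2
      ⟨fun t => by have := (adj26_zero_iff.1 (d.2.2 t)).2.2.1; omega,
        by simpa [Prod.snd_sum, Prod.fst_sum] using congrArg (·.2.1) d.2.1⟩⟩,
     ⟨fun t => (d.1 t).2.2, mem_stepSeqs.2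
      ⟨fun t => by have := (adj26_zero_iff.1 (d.2.2 t)).2.2.2; omega,
        by simpa [Prod.snd_sum] using congrArg (·.2.2) d.2.1⟩⟩)
  invFun yz := ⟨fun t => (1, yz.1.1 t, yz.2.1 t), by
    obtain ⟨⟨y, hy⟩, ⟨z, hz⟩⟩ := yz
    rw [mem_stepSeqs] at hy hz
    refine ⟨by simp [Prod.ext_iff, Prod.fst_sum, Prod.snd_sum, hy.2, hz.2], fun t => ?_⟩
    rw [adj26_zero_iff]
    rcases hy.1 t with h | h | h <;> rcases hz.1 t with h' | h' | h' <;> simp [h, h']⟩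
  left_inv d := by
    ext t : 2
    exact Prod.ext (fst_eq_one_of_adj26_of_sum d.2.2 (by simp [d.2.1]) t).symm rfl
  right_inv _ := rfl

def shortestPath26Equiv (n : ℕ) (j k : ℤ) :
    {f : Fin (n + 1) → ℤ × ℤ × ℤ // IsPath26 n f (0, 0, 0) ((n : ℤ), j, k)} ≃
      stepSeqs (Fin n) j × stepSeqs (Fin n) k :=
  (Equiv.subtypeEquivRight fun _ => isPath26_iff).trans <|
    (pathIncrementsEquiv (Adj26 0) _ _).trans <|
      (Equiv.subtypeEquivRight fun _ => by simp).trans (shortestStepsEquiv n j k)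

/-- For `i ≥ j`, `i ≥ k` (nonnegative), the number of shortest 26-neighbor paths from the
origin to `(i,j,k)` equals the product of the two explicit 8-neighborhood sums. -/
theorem count_shortest_paths_26N_explicit (i j k : ℕ) (hj : j ≤ i) (hk : k ≤ i) :
    Nat.card {f : Fin (i + 1) → ℤ × ℤ × ℤ //
        IsPath26 i f (0, 0, 0) ((i : ℤ), (j : ℤ), (k : ℤ))} =
      (∑ b ∈ Finset.range (i + 1),
          if 2 * b ≤ i - j then
            Nat.factorial i /
              (Nat.factorial b * Nat.factorial (j + b) * Nat.factorial (i - j - 2 * b))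
          else 0) *
        ∑ a ∈ Finset.range (i + 1),
          if 2 * a ≤ i - k then
            Nat.factorial i /
              (Nat.factorial a * Nat.factorial (k + a) * Nat.factorial (i - k - 2 * a))
          else 0 := by
  rw [Nat.card_congr (shortestPath26Equiv i j k), Nat.card_prod, Nat.card_eq_finsetCard,
    Nat.card_eq_finsetCard, card_stepSeqs, card_stepSeqs, Fintype.card_fin]
  simp only [Nat.choose_mul_choose_sub_eq_ite hj, Nat.choose_mul_choose_sub_eq_ite hk]
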